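/- arXiv:1612.07162 — 4 statements merged into one kernel-verified Lean document; each statement's English description precedes it below -/
import Mathlib

section
/- (Peeling lemma) Let G = (U ∪ V, E) be a bipartite (r,c)-boundary expander with r ≥ 1 and c > 0. Then every subset U' ⊆ U of size ℓ ≤ r can be ordered as u₁,…,u_ℓ in such a way that there exists a matching to distinct vertices v₁,…,v_ℓ ∈ V with v_i ∈ N(u_i) \ N({u₁,…,u_{i−1}}) for every i. -/
/-!
A nonempty set `S` of at most `r` left vertices has a nonempty boundary, so some `u ∈ S` has a
neighbour `v` seen by no other vertex of `S`. Placing `u` last with partner `v` and peeling the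
rest of `S` recursively gives the ordering; injectivity of both sequences is then automatic,
since `vᵢ` is adjacent to `uᵢ` but to no earlier `uⱼ`.
-/

/-- The neighbourhood in a bipartite graph (given by its edge set `E`)
of a set `U'` of left vertices. -/
def nbhdSet {α β : Type*} [DecidableEq α] [DecidableEq β]
    (E : Finset (α × β)) (U' : Finset α) : Finset β :=
  (E.filter (fun p => p.1 ∈ U')).image Prod.snd

/-- The boundary (set of unique neighbours) of a left vertex set `U'`. -/
def boundary {α β : Type*} [DecidableEq α] [DecidableEq β]
    (E : Finset (α × β)) (U' : Finset α) : Finset β :=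
  (nbhdSet E U').filter
    (fun v => ((E.filter (fun p => p.2 = v ∧ p.1 ∈ U')).image Prod.fst).card = 1)

/-- `E` is an `(r,c)`-boundary expander on the left vertex set `A`. -/
def isBoundaryExpanderOn {α β : Type*} [DecidableEq α] [DecidableEq β]
    (E : Finset (α × β)) (A : Finset α) (r : ℕ) (c : ℝ) : Prop :=
  ∀ U' ⊆ A, U'.card ≤ r → c * U'.card ≤ ((boundary E U').card : ℝ)

open Finset

section Peeling

variable {α β : Type*} [DecidableEq α] [DecidableEq β] (E : Finset (α × β))

theorem mem_nbhdSet {S : Finset α} {b : β} : b ∈ nbhdSet E S ↔ ∃ a ∈ S, (a, b) ∈ E := by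
  simp only [nbhdSet, mem_image, mem_filter]
  constructor
  · rintro ⟨⟨a, b'⟩, ⟨hE, ha⟩, rfl⟩
    exact ⟨a, ha, hE⟩
  · rintro ⟨a, ha, hE⟩
    exact ⟨(a, b), ⟨hE, ha⟩, rfl⟩

theorem nbhdSet_mono {S T : Finset α} (h : S ⊆ T) : nbhdSet E S ⊆ nbhdSet E T := by
  intro b hb
  obtain ⟨a, ha, hE⟩ := (mem_nbhdSet E).1 hb
  exact (mem_nbhdSet E).2 ⟨a, h ha, hE⟩

theorem exists_mem_nbhdSet_sdiff_of_mem_boundary {S : Finset α} {v : β}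
    (hv : v ∈ boundary E S) : ∃ u ∈ S, v ∈ nbhdSet E {u} \ nbhdSet E (S.erase u) := by
  obtain ⟨-, hunique⟩ := mem_filter.1 hv
  obtain ⟨u, hu⟩ := card_eq_one.1 hunique
  have mem_iff : ∀ a, a ∈ S ∧ (a, v) ∈ E ↔ a = u := fun a => by
    rw [← mem_singleton, ← hu]
    simp only [mem_image, mem_filter, Prod.exists]
    grind
  obtain ⟨huS, huv⟩ := (mem_iff u).2 rfl
  refine ⟨u, huS, mem_sdiff.2 ⟨(mem_nbhdSet E).2 ⟨u, mem_singleton_self u, huv⟩, ?_⟩⟩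
  intro hv'
  obtain ⟨a, ha, hav⟩ := (mem_nbhdSet E).1 hv'
  exact ne_of_mem_erase ha ((mem_iff a).1 ⟨mem_of_mem_erase ha, hav⟩)

theorem boundary_nonempty_of_le_card {S : Finset α} {c : ℝ} (hc : 0 < c) (hS : S.Nonempty)
    (h : c * S.card ≤ (boundary E S).card) : (boundary E S).Nonempty := by
  have : (0 : ℝ) < (boundary E S).card := lt_of_lt_of_le (by have := hS.card_pos; positivity) h
  exact card_pos.1 (by exact_mod_cast this)

def IsPeeling {n : ℕ} (u : Fin n → α) (v : Fin n → β) : Prop :=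
  ∀ i, v i ∈ nbhdSet E {u i} ∧ v i ∉ nbhdSet E ((univ.filter (· < i)).image u)

variable {E}

theorem IsPeeling.ne_of_lt {n : ℕ} {u : Fin n → α} {v : Fin n → β} (h : IsPeeling E u v)
    {i j : Fin n} (hji : j < i) : u j ≠ u i ∧ v j ≠ v i := by
  have hnot : v i ∉ nbhdSet E {u j} := fun hv => (h i).2 <|
    nbhdSet_mono E (singleton_subset_iff.2 (mem_image_of_mem u (by simpa using hji))) hv
  exact ⟨fun huji => hnot (huji ▸ (h i).1), fun hvji => hnot (hvji ▸ (h j).1)⟩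

theorem IsPeeling.injective_left {n : ℕ} {u : Fin n → α} {v : Fin n → β}
    (h : IsPeeling E u v) : Function.Injective u :=
  .of_lt_imp_ne fun _ _ hji => (h.ne_of_lt hji).1

theorem IsPeeling.injective_right {n : ℕ} {u : Fin n → α} {v : Fin n → β}
    (h : IsPeeling E u v) : Function.Injective v :=
  .of_lt_imp_ne fun _ _ hji => (h.ne_of_lt hji).2

theorem image_filter_lt_snoc {γ : Type*} [DecidableEq γ] {n : ℕ} (f : Fin n → γ) (x : γ)
    (i : Fin (n + 1)) :
    (univ.filter (· < i)).image (Fin.snoc f x : Fin (n + 1) → γ) =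
      (univ.filter (fun j : Fin n => j.castSucc < i)).image f := by
  ext b
  simp only [mem_image, mem_filter, mem_univ, true_and]
  constructor
  · rintro ⟨j, hji, rfl⟩
    obtain ⟨j, rfl⟩ := Fin.exists_castSucc_eq.2 (Fin.ne_last_of_lt hji)
    exact ⟨j, hji, by simp⟩
  · rintro ⟨j, hji, rfl⟩
    exact ⟨j.castSucc, hji, by simp⟩

theorem IsPeeling.snoc {n : ℕ} {u : Fin n → α} {v : Fin n → β} (h : IsPeeling E u v)
    {x : α} {y : β} (hy : y ∈ nbhdSet E {x} \ nbhdSet E (univ.image u)) :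
    IsPeeling E (Fin.snoc u x : Fin (n + 1) → α) (Fin.snoc v y : Fin (n + 1) → β) := by
  obtain ⟨hyx, hyu⟩ := mem_sdiff.1 hy
  intro i
  rw [image_filter_lt_snoc]
  induction i using Fin.lastCases with
  | last =>
    simp only [Fin.snoc_last]
    exact ⟨hyx, fun hy' => hyu (nbhdSet_mono E (image_subset_image (subset_univ _)) hy')⟩
  | cast k =>
    simpa only [Fin.snoc_castSucc, Fin.castSucc_lt_castSucc_iff] using h k

theorem exists_isPeeling {r : ℕ} {c : ℝ} (hc : 0 < c) :
    ∀ (n : ℕ) (S : Finset α), S.card = n → n ≤ r → isBoundaryExpanderOn E S r c →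
      ∃ (u : Fin n → α) (v : Fin n → β), univ.image u = S ∧ IsPeeling E u v := by
  intro n
  induction n with
  | zero =>
    intro S hS _ _
    exact ⟨Fin.elim0, Fin.elim0, by simp [card_eq_zero.1 hS], fun i => i.elim0⟩
  | succ n ih =>
    intro S hS hnr hexp
    have hSne : S.Nonempty := card_pos.1 (by omega)
    obtain ⟨y, hy⟩ := boundary_nonempty_of_le_card E hc hSne (hexp S subset_rfl (by omega))
    obtain ⟨x, hxS, hxy⟩ := exists_mem_nbhdSet_sdiff_of_mem_boundary E hy
    obtain ⟨u, v, hu, huv⟩ := ih (S.erase x) (by rw [card_erase_of_mem hxS, hS]; rfl)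
      (by omega) fun T hT => hexp T (hT.trans (erase_subset x S))
    refine ⟨Fin.snoc u x, Fin.snoc v y, ?_, huv.snoc (hu ▸ hxy)⟩
    rw [← coe_inj, Fintype.coe_image_univ, Fin.range_snoc, ← Fintype.coe_image_univ, hu,
      coe_erase, Set.insert_sdiff_singleton, Set.insert_eq_of_mem (mem_coe.2 hxS)]

end Peeling

theorem stmt1_general {α β : Type*} [DecidableEq α] [DecidableEq β]
    (E : Finset (α × β)) (r : ℕ) (c : ℝ) (hc : 0 < c)
    (hexp : ∀ U' : Finset α, U'.card ≤ r → c * U'.card ≤ ((boundary E U').card : ℝ))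
    (U' : Finset α) (ℓ : ℕ) (hcard : U'.card = ℓ) (hℓ : ℓ ≤ r) :
    ∃ (u : Fin ℓ → α) (v : Fin ℓ → β),
      Function.Injective u ∧ (Finset.univ.image u = U') ∧
      Function.Injective v ∧
      ∀ i : Fin ℓ,
        v i ∈ nbhdSet E {u i} ∧
        v i ∉ nbhdSet E ((Finset.univ.filter (fun j : Fin ℓ => j < i)).image u) := by
  obtain ⟨u, v, hu, huv⟩ := exists_isPeeling hc ℓ U' hcard hℓ fun T _ => hexp T
  exact ⟨u, v, huv.injective_left, hu, huv.injective_right, huv⟩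

/-- Peeling lemma: in an (r,c)-boundary expander with r ≥ 1 and
c > 0, every left set U' of size ℓ ≤ r can be ordered u₁,…,u_ℓ with a matching
v₁,…,v_ℓ such that vᵢ ∈ N(uᵢ) \ N({u₁,…,u_{i−1}}). -/
theorem stmt1 {α β : Type*} [DecidableEq α] [DecidableEq β]
    (E : Finset (α × β)) (r : ℕ) (c : ℝ) (hr : 1 ≤ r) (hc : 0 < c)
    (hexp : ∀ U' : Finset α, U'.card ≤ r → c * U'.card ≤ ((boundary E U').card : ℝ))
    (U' : Finset α) (ℓ : ℕ) (hcard : U'.card = ℓ) (hℓ : ℓ ≤ r) :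
    ∃ (u : Fin ℓ → α) (v : Fin ℓ → β),
      Function.Injective u ∧ (Finset.univ.image u = U') ∧
      Function.Injective v ∧
      ∀ i : Fin ℓ,
        v i ∈ nbhdSet E {u i} ∧
        v i ∉ nbhdSet E ((Finset.univ.filter (fun j : Fin ℓ => j < i)).image u) :=
  stmt1_general E r c hc hexp U' ℓ hcard hℓ
end

section
/- For all ε, δ > 0 and d₀ ≥ 2 with δ + 1/d₀ < ε/2, there exists n₀ such that for all n ≥ n₀, all d with d₀ ≤ d ≤ n^{1/2−ε}, and all r ≤ n^{1/2}, there exists a bipartite (r,2)-boundary expander with left side of size ⌊n^{δd}⌋, right side of size n, and left degree at most d. -/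
open Finset Real

lemma stmt6aux_pow_self_le (t : ℕ) :
    (t : ℝ) ^ t ≤ Real.exp 1 ^ t * t.factorial := by
  induction t with
  | zero => simp
  | succ t ih =>
    have key : ((t + 1 : ℕ) : ℝ) ^ t ≤ Real.exp 1 * (t : ℝ) ^ t := by
      rcases Nat.eq_zero_or_pos t with h | h
      · subst h; simpa using Real.one_le_exp (by norm_num)
      · have ht : (0:ℝ) < t := by exact_mod_cast h
        have h1 : ((t:ℝ) + 1) ^ t = ((t:ℝ) ^ t) * (1 + 1 / t) ^ t := by
          rw [← mul_pow]; congr 1; field_simp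
        have h2 : (1 + 1 / (t:ℝ)) ^ t ≤ Real.exp 1 := by
          have := Real.add_one_le_exp (1 / (t:ℝ))
          calc (1 + 1 / (t:ℝ)) ^ t ≤ Real.exp (1 / t) ^ t := by
                apply pow_le_pow_left₀ (by positivity); linarith
            _ = Real.exp ((t : ℝ) * (1 / t)) := (Real.exp_nat_mul _ t).symm
            _ = Real.exp 1 := by rw [mul_one_div, div_self ht.ne']
        push_cast
        rw [h1]
        calc (t:ℝ) ^ t * (1 + 1/(t:ℝ)) ^ t ≤ (t:ℝ)^t * Real.exp 1 :=
              mul_le_mul_of_nonneg_left h2 (by positivity)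
          _ = Real.exp 1 * (t:ℝ)^t := by ring
    calc ((t + 1 : ℕ) : ℝ) ^ (t+1) = ((t+1:ℕ):ℝ) ^ t * ((t+1:ℕ):ℝ) := by ring
      _ ≤ (Real.exp 1 * (t:ℝ)^t) * ((t+1:ℕ):ℝ) :=
          mul_le_mul_of_nonneg_right key (by positivity)
      _ ≤ (Real.exp 1 * (Real.exp 1 ^ t * t.factorial)) * ((t+1:ℕ):ℝ) :=
          mul_le_mul_of_nonneg_right (mul_le_mul_of_nonneg_left ih (by positivity)) (by positivity)
      _ = Real.exp 1 ^ (t+1) * ((t+1) * t.factorial : ℕ) := by push_cast; ring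
      _ = Real.exp 1 ^ (t+1) * (t+1).factorial := by rw [Nat.factorial_succ]

section Graph

variable {N d n : ℕ}

/-- The bipartite graph associated to a choice function. -/
def stmt6Eg (f : Fin N × Fin d → Fin n) : Finset (Fin N × Fin n) :=
  Finset.univ.image (fun q => (q.1, f q))

lemma stmt6_mem_Eg {f : Fin N × Fin d → Fin n} {p : Fin N × Fin n} :
    p ∈ stmt6Eg f ↔ ∃ q : Fin N × Fin d, q.1 = p.1 ∧ f q = p.2 := by
  simp [stmt6Eg, Prod.ext_iff]

lemma stmt6_nbhd_eq (f : Fin N × Fin d → Fin n) (U' : Finset (Fin N)) :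
    nbhdSet (stmt6Eg f) U' = (U' ×ˢ univ).image f := by
  ext v
  simp only [nbhdSet, mem_image, mem_filter, mem_product, mem_univ, and_true]
  constructor
  · rintro ⟨p, ⟨hpE, hp1⟩, rfl⟩
    obtain ⟨q, hq1, hq2⟩ := stmt6_mem_Eg.1 hpE
    exact ⟨q, by rw [hq1]; exact hp1, hq2⟩
  · rintro ⟨q, hq, rfl⟩
    exact ⟨(q.1, f q), ⟨stmt6_mem_Eg.2 ⟨q, rfl, rfl⟩, hq⟩, rfl⟩

lemma stmt6_det_step (f : Fin N × Fin d → Fin n) (U' : Finset (Fin N))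
    (hb : (boundary (stmt6Eg f) U').card < 2 * U'.card) :
    ((U' ×ˢ (univ : Finset (Fin d))).image f).card ≤ (U'.card * d + 2 * U'.card - 1) / 2 := by
  classical
  have hBT : boundary (stmt6Eg f) U' ⊆ (U' ×ˢ (univ : Finset (Fin d))).image f := by
    rw [← stmt6_nbhd_eq f U']; exact filter_subset _ _
  have hsum : (U' ×ˢ (univ : Finset (Fin d))).card
      = ∑ v ∈ (U' ×ˢ (univ : Finset (Fin d))).image f,
        ((U' ×ˢ (univ : Finset (Fin d))).filter (fun q => f q = v)).card :=
    card_eq_sum_card_image f _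
  have hge : ∀ v ∈ (U' ×ˢ (univ : Finset (Fin d))).image f,
      (if v ∈ boundary (stmt6Eg f) U' then 1 else 2)
        ≤ ((U' ×ˢ (univ : Finset (Fin d))).filter (fun q => f q = v)).card := by
    intro v hv
    by_cases hvB : v ∈ boundary (stmt6Eg f) U'
    · simp only [hvB, if_true]
      obtain ⟨q, hq, hfq⟩ := mem_image.1 hv
      exact card_pos.2 ⟨q, mem_filter.2 ⟨hq, hfq⟩⟩
    · simp only [hvB, if_false]
      have hvN : v ∈ nbhdSet (stmt6Eg f) U' := by rw [stmt6_nbhd_eq f U']; exact hv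
      have hcard1 : ¬ (((stmt6Eg f).filter (fun p => p.2 = v ∧ p.1 ∈ U')).image Prod.fst).card = 1 := by
        intro hc
        exact hvB (mem_filter.2 ⟨hvN, hc⟩)
      have hW1 : 1 ≤ (((stmt6Eg f).filter (fun p => p.2 = v ∧ p.1 ∈ U')).image Prod.fst).card := by
        obtain ⟨q, hq, hfq⟩ := mem_image.1 hv
        have hq' : q.1 ∈ U' := (mem_product.1 hq).1
        apply card_pos.2
        exact ⟨q.1, mem_image.2 ⟨(q.1, v), mem_filter.2 ⟨stmt6_mem_Eg.2 ⟨q, rfl, hfq⟩, rfl, hq'⟩, rfl⟩⟩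
      have hW2 : 1 < (((stmt6Eg f).filter (fun p => p.2 = v ∧ p.1 ∈ U')).image Prod.fst).card :=
        lt_of_le_of_ne hW1 (fun hc => hcard1 hc.symm)
      obtain ⟨a, ha, b, hbm, hab⟩ := one_lt_card.1 hW2
      obtain ⟨pa, hpa, hpa1⟩ := mem_image.1 ha
      obtain ⟨pb, hpb, hpb1⟩ := mem_image.1 hbm
      have hpa' := mem_filter.1 hpa
      have hpb' := mem_filter.1 hpb
      obtain ⟨qa, hqa1, hqa2⟩ := stmt6_mem_Eg.1 hpa'.1
      obtain ⟨qb, hqb1, hqb2⟩ := stmt6_mem_Eg.1 hpb'.1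
      apply one_lt_card.2
      refine ⟨qa, mem_filter.2 ⟨?_, by rw [hqa2, hpa'.2.1]⟩,
              qb, mem_filter.2 ⟨?_, by rw [hqb2, hpb'.2.1]⟩, ?_⟩
      · exact mem_product.2 ⟨hqa1 ▸ (hpa1 ▸ hpa'.2.2), mem_univ _⟩
      · exact mem_product.2 ⟨hqb1 ▸ (hpb1 ▸ hpb'.2.2), mem_univ _⟩
      · intro hc
        apply hab
        rw [← hpa1, ← hqa1, hc, hqb1, hpb1]
  have hsum2 : (∑ v ∈ (U' ×ˢ (univ : Finset (Fin d))).image f,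
      (if v ∈ boundary (stmt6Eg f) U' then 1 else 2)) ≤ (U' ×ˢ (univ : Finset (Fin d))).card := by
    rw [hsum]; exact sum_le_sum hge
  set T := (U' ×ˢ (univ : Finset (Fin d))).image f with hTdef
  set B := boundary (stmt6Eg f) U' with hBdef
  have hsplit : (∑ v ∈ T, (if v ∈ B then 1 else 2))
      = B.card + 2 * (T.card - B.card) := by
    rw [← sum_filter_add_sum_filter_not T (· ∈ B)]
    have h1 : T.filter (· ∈ B) = B := by
      rw [filter_mem_eq_inter, inter_eq_right.2 hBT]
    have h2 : T.filter (fun v => ¬ v ∈ B) = T \ B := (sdiff_eq_filter T B).symm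
    rw [h1, h2]
    have e1 : (∑ x ∈ B, if x ∈ B then 1 else 2) = B.card := by
      rw [Finset.sum_congr rfl (fun x hx => if_pos hx), sum_const, smul_eq_mul, mul_one]
    have e2 : (∑ x ∈ T \ B, if x ∈ B then 1 else 2) = 2 * (T \ B).card := by
      rw [Finset.sum_congr rfl (fun x hx => if_neg (mem_sdiff.1 hx).2), sum_const,
        smul_eq_mul, mul_comm]
    rw [e1, e2, card_sdiff_of_subset hBT]
  have hP : (U' ×ˢ (univ : Finset (Fin d))).card = U'.card * d := by
    rw [card_product, card_univ, Fintype.card_fin]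
  have hBcard : B.card ≤ T.card := card_le_card hBT
  have h2T : 2 * T.card ≤ U'.card * d + 2 * U'.card - 1 := by
    rw [hsplit, hP] at hsum2
    omega
  rw [Nat.le_div_iff_mul_le (by norm_num : 0 < 2)]
  omega

lemma stmt6_count_step (U' : Finset (Fin N)) (t : ℕ) (htn : t ≤ n) :
    ((univ : Finset (Fin N × Fin d → Fin n)).filter
        (fun f => ((U' ×ˢ (univ : Finset (Fin d))).image f).card ≤ t)).card
      ≤ n.choose t * (t ^ (U'.card * d) * n ^ (N * d - U'.card * d)) := by
  classical
  set P : Finset (Fin N × Fin d) := U' ×ˢ univ with hPdef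
  have hsub : ((univ : Finset (Fin N × Fin d → Fin n)).filter
        (fun f => (P.image f).card ≤ t))
      ⊆ (powersetCard t (univ : Finset (Fin n))).biUnion
          (fun S => (univ : Finset (Fin N × Fin d → Fin n)).filter
            (fun f => ∀ q ∈ P, f q ∈ S)) := by
    intro f hf
    have hcard := (mem_filter.1 hf).2
    obtain ⟨S, hS1, hS2⟩ := exists_superset_card_eq hcard (by simpa using htn)
    refine mem_biUnion.2 ⟨S, ?_, mem_filter.2 ⟨mem_univ _, fun q hq => hS1 (mem_image_of_mem f hq)⟩⟩
    exact mem_powersetCard.2 ⟨subset_univ _, hS2⟩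
  have hper : ∀ S ∈ powersetCard t (univ : Finset (Fin n)),
      ((univ : Finset (Fin N × Fin d → Fin n)).filter (fun f => ∀ q ∈ P, f q ∈ S)).card
        = t ^ (U'.card * d) * n ^ (N * d - U'.card * d) := by
    intro S hS
    have hScard : S.card = t := (mem_powersetCard.1 hS).2
    have heq : (univ : Finset (Fin N × Fin d → Fin n)).filter (fun f => ∀ q ∈ P, f q ∈ S)
        = Fintype.piFinset (fun q => if q ∈ P then S else univ) := by
      ext f
      simp only [mem_filter, mem_univ, true_and, Fintype.mem_piFinset]
      constructor
      · intro hf q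
        by_cases hq : q ∈ P
        · simpa [hq] using hf q hq
        · simp [hq]
      · intro hf q hq
        have := hf q
        simpa [hq] using this
    rw [heq, Fintype.card_piFinset]
    have hcards : ∀ q : Fin N × Fin d, ((if q ∈ P then S else univ).card) = if q ∈ P then t else n := by
      intro q; by_cases hq : q ∈ P <;> simp [hq, hScard]
    rw [Finset.prod_congr rfl (fun q _ => hcards q)]
    rw [← Finset.prod_sdiff (subset_univ P)]
    have hP : P.card = U'.card * d := by rw [hPdef, card_product, card_univ, Fintype.card_fin]
    have hPc : ((univ : Finset (Fin N × Fin d)) \ P).card = N * d - U'.card * d := by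
      rw [card_sdiff_of_subset (subset_univ P), hP, card_univ, Fintype.card_prod,
        Fintype.card_fin, Fintype.card_fin]
    rw [Finset.prod_congr rfl (fun q hq => if_neg (mem_sdiff.1 hq).2),
      Finset.prod_congr rfl (fun q (hq : q ∈ P) => if_pos hq),
      prod_const, prod_const, hP, hPc, mul_comm]
  calc _ ≤ _ := card_le_card hsub
    _ ≤ ∑ S ∈ powersetCard t (univ : Finset (Fin n)),
          ((univ : Finset (Fin N × Fin d → Fin n)).filter (fun f => ∀ q ∈ P, f q ∈ S)).card :=
        card_biUnion_le
    _ = (powersetCard t (univ : Finset (Fin n))).card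
          * (t ^ (U'.card * d) * n ^ (N * d - U'.card * d)) := by
        rw [Finset.sum_congr rfl hper, sum_const, smul_eq_mul]
    _ = _ := by rw [card_powersetCard, card_univ, Fintype.card_fin]

lemma stmt6_degree (f : Fin N × Fin d → Fin n) (u : Fin N) :
    (nbhdSet (stmt6Eg f) {u}).card ≤ d := by
  rw [stmt6_nbhd_eq f {u}]
  calc _ ≤ ({u} ×ˢ (univ : Finset (Fin d))).card := card_image_le
    _ = d := by rw [card_product, card_singleton, one_mul, card_univ, Fintype.card_fin]

end Graph


lemma stmt6aux_base (ε δ γ c L dR d₀R : ℝ) (hε : 0 < ε) (hεhalf : ε ≤ 1/2)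
    (hγdef : γ = ε/2 - δ - 1/d₀R) (hγ : 0 < γ) (hcdef : c = d₀R * γ / 2)
    (hd₀pos : 0 < d₀R) (hdd₀ : d₀R ≤ dR) (hL0 : 0 < L) (hγL : 2 ≤ γ * L) :
    dR * 1 + (δ * dR - ε * (dR - 2) / 2) * L ≤ (-(1:ℝ)/2 - c) * L := by
  have hdnn : (0:ℝ) ≤ dR := le_trans hd₀pos.le hdd₀
  have k1 : dR ≤ γ * dR * L / 2 := by
    nlinarith [mul_le_mul_of_nonneg_left hγL hdnn]
  have hd1 : (1:ℝ) ≤ dR / d₀R := (one_le_div hd₀pos).2 hdd₀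
  have k2 : δ * dR - ε * (dR - 2) / 2 ≤ -1 - γ * dR + ε := by
    have hδγ : δ = ε/2 - 1/d₀R - γ := by rw [hγdef]; ring
    have h3 : (ε/2 - 1/d₀R - γ) * dR - ε * (dR - 2) / 2 = -(dR/d₀R) - γ*dR + ε := by
      field_simp
      ring
    rw [hδγ, h3]
    linarith [hd1]
  have k3 : dR * 1 + (δ * dR - ε * (dR - 2) / 2) * L ≤ γ*dR*L/2 + (-1 - γ*dR + ε) * L := by
    have := mul_le_mul_of_nonneg_right k2 hL0.le
    linarith
  have k4 : γ*dR*L/2 + (-1 - γ*dR + ε) * L ≤ (-(1:ℝ)/2 - c) * L := by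
    have hγd : γ * d₀R ≤ γ * dR := mul_le_mul_of_nonneg_left hdd₀ hγ.le
    have hnn : 0 ≤ L * ((1/2 - ε) + (γ*dR - γ*d₀R)/2) :=
      mul_nonneg hL0.le (by linarith [hεhalf, hγd])
    rw [hcdef]
    nlinarith [hnn]
  linarith [k3, k4]

set_option maxHeartbeats 1000000 in
/-- existence of boundary expanders. For all ε, δ > 0 and d₀ ≥ 2
with δ + 1/d₀ < ε/2, there is n₀ such that for all n ≥ n₀, d₀ ≤ d ≤ n^{1/2−ε}
and r ≤ n^{1/2}, there is a bipartite (r,2)-boundary expander with left side of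
size ⌊n^{δd}⌋, right side of size n, and left degree at most d. -/
theorem stmt6 (ε δ : ℝ) (hε : 0 < ε) (hδ : 0 < δ) (d₀ : ℕ) (hd₀ : 2 ≤ d₀)
    (h : δ + 1 / (d₀ : ℝ) < ε / 2) :
    ∃ n₀ : ℕ, ∀ n : ℕ, n₀ ≤ n → ∀ d : ℕ, d₀ ≤ d →
      (d : ℝ) ≤ (n : ℝ) ^ ((1 : ℝ) / 2 - ε) → ∀ r : ℕ, (r : ℝ) ≤ (n : ℝ) ^ ((1 : ℝ) / 2) →
      ∃ E : Finset (Fin (⌊(n : ℝ) ^ (δ * d)⌋₊) × Fin n),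
        (∀ u, (nbhdSet E {u}).card ≤ d) ∧
        isBoundaryExpanderOn E Finset.univ r 2 := by
  classical
  rcases le_or_gt ε (1/2) with hεhalf | hεhalf
  case inr =>
    -- ε > 1/2 : the hypotheses on d are contradictory for n ≥ 2
    refine ⟨2, fun n hn d hd hdn r hr => ?_⟩
    exfalso
    have hn1 : (1:ℝ) ≤ (n:ℝ) := by exact_mod_cast Nat.one_le_of_lt hn
    have h1 : (n:ℝ) ^ ((1:ℝ)/2 - ε) ≤ 1 :=
      Real.rpow_le_one_of_one_le_of_nonpos hn1 (by linarith)
    have h2 : (2:ℝ) ≤ (d:ℝ) := by exact_mod_cast le_trans hd₀ hd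
    linarith
  case inl =>
  set γ : ℝ := ε/2 - δ - 1/d₀ with hγdef
  have hd₀R : (2:ℝ) ≤ (d₀:ℝ) := by exact_mod_cast hd₀
  have hd₀pos : (0:ℝ) < d₀ := by linarith
  have hγ : 0 < γ := by rw [hγdef]; linarith
  set c : ℝ := d₀ * γ / 2 with hcdef
  have hc : 0 < c := by positivity
  refine ⟨max 3 (⌈Real.exp (2/γ)⌉₊ + 1), fun n hn d hd hdn r hr => ?_⟩
  have hn3 : 3 ≤ n := le_trans (le_max_left _ _) hn
  have hnceil : ⌈Real.exp (2/γ)⌉₊ + 1 ≤ n := le_trans (le_max_right _ _) hn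
  have hn0R : (0:ℝ) < n := by
    have : (3:ℝ) ≤ n := by exact_mod_cast hn3
    linarith
  have hn1R : (1:ℝ) < n := by
    have : (3:ℝ) ≤ n := by exact_mod_cast hn3
    linarith
  have hexpn : Real.exp (2/γ) ≤ n :=
    (Nat.le_ceil _).trans (by exact_mod_cast Nat.le_of_succ_le hnceil)
  have hlogn : 2/γ ≤ Real.log n := by
    rw [← Real.log_exp (2/γ)]
    exact Real.log_le_log (Real.exp_pos _) hexpn
  have hL0 : (0:ℝ) < Real.log n := lt_of_lt_of_le (by positivity) hlogn
  have hd2 : 2 ≤ d := hd₀.trans hd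
  have hdd₀ : (d₀:ℝ) ≤ d := by exact_mod_cast hd
  set N := ⌊(n:ℝ) ^ (δ * (d:ℕ))⌋₊ with hNdef
  have hNle : (N:ℝ) ≤ (n:ℝ) ^ (δ * (d:ℝ)) := Nat.floor_le (by positivity)
  -- it suffices to find a good choice function
  suffices hgood : ∃ f : Fin N × Fin d → Fin n, ∀ U' : Finset (Fin N),
      U'.card ≤ r → 2 * U'.card ≤ (boundary (stmt6Eg f) U').card by
    obtain ⟨f, hf⟩ := hgood
    refine ⟨stmt6Eg f, fun u => stmt6_degree f u, ?_⟩
    intro U' _ hU'r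
    exact_mod_cast hf U' hU'r
  set tOf : ℕ → ℕ := fun s => (s * d + 2 * s - 1) / 2 with htOfdef
  -- analytic facts and the crucial per-term bound
  have hkey : ∀ s : ℕ, 1 ≤ s → s ≤ r → tOf s ≤ n ∧
      ((N.choose s : ℝ) * ((n.choose (tOf s) : ℝ) *
        ((tOf s : ℝ) ^ (s*d) * (n:ℝ) ^ (N*d - s*d)))
        ≤ (n:ℝ)^(N*d) * (n:ℝ) ^ (-(1:ℝ)/2 - c)) := by
    intro s hs1 hsr
    have hsR : (s:ℝ) ≤ (n:ℝ) ^ ((1:ℝ)/2) := le_trans (by exact_mod_cast hsr) hr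
    have hmR : ((s*d : ℕ):ℝ) ≤ (n:ℝ) ^ ((1:ℝ) - ε) := by
      push_cast
      calc (s:ℝ) * d ≤ (n:ℝ) ^ ((1:ℝ)/2) * (n:ℝ) ^ ((1:ℝ)/2 - ε) :=
            mul_le_mul hsR hdn (by positivity) (by positivity)
        _ = (n:ℝ) ^ ((1:ℝ) - ε) := by
            rw [← Real.rpow_add hn0R]; congr 1; ring
    have h2t : 2 * tOf s ≤ s*d + 2*s - 1 := by
      have := Nat.div_mul_le_self (s*d + 2*s - 1) 2
      simp only [htOfdef]
      omega
    have h2s : 2*s ≤ s*d := by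
      calc 2*s = s*2 := by ring
        _ ≤ s*d := Nat.mul_le_mul_left s hd2
    have htm : tOf s ≤ s*d := by omega
    have htnR : (tOf s : ℝ) ≤ (n:ℝ) ^ ((1:ℝ) - ε) :=
      le_trans (by exact_mod_cast htm) hmR
    have hn_rpow : (n:ℝ) ^ ((1:ℝ) - ε) ≤ (n:ℝ) := by
      calc (n:ℝ) ^ ((1:ℝ) - ε) ≤ (n:ℝ) ^ (1:ℝ) :=
            Real.rpow_le_rpow_of_exponent_le hn1R.le (by linarith)
        _ = (n:ℝ) := Real.rpow_one _
    have htn : tOf s ≤ n := by exact_mod_cast le_trans htnR hn_rpow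
    refine ⟨htn, ?_⟩
    by_cases hsN : s ≤ N
    case neg =>
      have : N.choose s = 0 := Nat.choose_eq_zero_of_lt (by omega)
      rw [this]
      push_cast
      rw [zero_mul]
      positivity
    case pos =>
    have hmtN : s*(d-2) ≤ 2*(s*d - tOf s) := by
      have he : d = (d-2) + 2 := by omega
      have hm' : s*d = s*(d-2) + 2*s := by
        calc s*d = s*((d-2)+2) := by rw [← he]
          _ = s*(d-2) + 2*s := by ring
      omega
    have hmtR : (s:ℝ)*((d:ℝ)-2)/2 ≤ ((s*d - tOf s : ℕ):ℝ) := by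
      have hc1 : ((s*(d-2) : ℕ):ℝ) ≤ ((2*(s*d - tOf s) : ℕ):ℝ) := by exact_mod_cast hmtN
      push_cast [Nat.cast_sub htm, Nat.cast_sub hd2] at hc1
      rw [Nat.cast_sub htm]
      push_cast
      linarith
    set t := tOf s with htdef
    set m := s*d with hmdef
    -- A1
    have hA1 : (N.choose s : ℝ) ≤ ((n:ℝ) ^ (δ*(d:ℝ)))^s := by
      calc (N.choose s : ℝ) ≤ (N:ℝ)^s := by exact_mod_cast Nat.choose_le_pow N s
        _ ≤ _ := pow_le_pow_left₀ (Nat.cast_nonneg N) hNle s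
    -- A2
    have hdesc : (n.choose t : ℝ) * (t.factorial : ℝ) ≤ (n:ℝ)^t := by
      have : n.choose t * t.factorial ≤ n^t := by
        calc n.choose t * t.factorial = t.factorial * n.choose t := mul_comm _ _
          _ = n.descFactorial t := (Nat.descFactorial_eq_factorial_mul_choose n t).symm
          _ ≤ n^t := Nat.descFactorial_le_pow n t
      exact_mod_cast this
    have hts : (t:ℝ)^t ≤ Real.exp 1 ^ t * t.factorial := stmt6aux_pow_self_le t
    have hsplitpow : (t:ℝ)^m = (t:ℝ)^(m-t) * (t:ℝ)^t := by
      rw [← pow_add]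
      congr 1
      omega
    have hexpmono : Real.exp 1 ^ t ≤ Real.exp 1 ^ m :=
      pow_le_pow_right₀ (Real.one_le_exp zero_le_one) htm
    have hA2 : (n.choose t : ℝ) * (t:ℝ)^m
        ≤ Real.exp 1 ^ m * ((n:ℝ)^t * (t:ℝ)^(m-t)) := by
      calc (n.choose t : ℝ) * (t:ℝ)^m
          = (n.choose t : ℝ) * ((t:ℝ)^(m-t) * (t:ℝ)^t) := by rw [hsplitpow]
        _ ≤ (n.choose t : ℝ) * ((t:ℝ)^(m-t) * (Real.exp 1 ^ t * t.factorial)) :=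
            mul_le_mul_of_nonneg_left (mul_le_mul_of_nonneg_left hts (by positivity))
              (Nat.cast_nonneg _)
        _ = ((n.choose t : ℝ) * t.factorial) * ((t:ℝ)^(m-t) * Real.exp 1 ^ t) := by ring
        _ ≤ (n:ℝ)^t * ((t:ℝ)^(m-t) * Real.exp 1 ^ t) :=
            mul_le_mul_of_nonneg_right hdesc (by positivity)
        _ ≤ (n:ℝ)^t * ((t:ℝ)^(m-t) * Real.exp 1 ^ m) :=
            mul_le_mul_of_nonneg_left (mul_le_mul_of_nonneg_left hexpmono (by positivity))
              (by positivity)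
        _ = Real.exp 1 ^ m * ((n:ℝ)^t * (t:ℝ)^(m-t)) := by ring
    -- A3
    have hA3 : (t:ℝ)^(m-t) ≤ ((n:ℝ) ^ ((1:ℝ) - ε))^(m-t) :=
      pow_le_pow_left₀ (Nat.cast_nonneg _) htnR _
    -- combine all nat-powers of n into rpow
    have hsubMm : ((N*d - m : ℕ):ℝ) = ((N*d : ℕ):ℝ) - ((m:ℕ):ℝ) := by
      have : m ≤ N*d := by
        rw [hmdef]; exact Nat.mul_le_mul_right d hsN
      exact Nat.cast_sub this
    have hsubmt : ((m - t : ℕ):ℝ) = ((m:ℕ):ℝ) - ((t:ℕ):ℝ) :=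
      Nat.cast_sub htm
    have hX : ((n:ℝ) ^ (δ*(d:ℝ)))^s * ((n:ℝ)^t * (((n:ℝ) ^ ((1:ℝ) - ε))^(m-t) * (n:ℝ)^(N*d - m)))
        = (n:ℝ)^(N*d) * (n:ℝ) ^ (δ*(d:ℝ)*s - ε*(((m:ℕ):ℝ) - t)) := by
      rw [← Real.rpow_natCast ((n:ℝ) ^ (δ*(d:ℝ))) s, ← Real.rpow_mul hn0R.le,
        ← Real.rpow_natCast ((n:ℝ) ^ ((1:ℝ) - ε)) (m-t), ← Real.rpow_mul hn0R.le,
        ← Real.rpow_natCast (n:ℝ) t, ← Real.rpow_natCast (n:ℝ) (N*d - m),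
        ← Real.rpow_natCast (n:ℝ) (N*d),
        ← Real.rpow_add hn0R, ← Real.rpow_add hn0R, ← Real.rpow_add hn0R,
        ← Real.rpow_add hn0R]
      congr 1
      rw [hsubmt, hsubMm]
      push_cast
      ring
    -- exponent comparison
    have hE1 : (n:ℝ) ^ (δ*(d:ℝ)*s - ε*(((m:ℕ):ℝ) - t)) ≤ (n:ℝ) ^ (δ*(d:ℝ)*s - ε*((s:ℝ)*((d:ℝ)-2)/2)) := by
      apply Real.rpow_le_rpow_of_exponent_le hn1R.le
      rw [← hsubmt]
      nlinarith [hmtR, hε.le]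
    -- pull out the s-th power
    have hE2 : Real.exp 1 ^ m * (n:ℝ) ^ (δ*(d:ℝ)*s - ε*((s:ℝ)*((d:ℝ)-2)/2))
        = (Real.exp 1 ^ d * (n:ℝ) ^ (δ*(d:ℝ) - ε*((d:ℝ)-2)/2))^s := by
      rw [mul_pow, ← pow_mul]
      congr 1
      · rw [hmdef, mul_comm d s]
      · rw [← Real.rpow_natCast ((n:ℝ) ^ (δ*(d:ℝ) - ε*((d:ℝ)-2)/2)) s, ← Real.rpow_mul hn0R.le]
        congr 1
        ring
    -- the base inequality via logarithms
    have hbase : Real.exp 1 ^ d * (n:ℝ) ^ (δ*(d:ℝ) - ε*((d:ℝ)-2)/2) ≤ (n:ℝ) ^ (-(1:ℝ)/2 - c) := by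
      have hLHSpos : (0:ℝ) < Real.exp 1 ^ d * (n:ℝ) ^ (δ*(d:ℝ) - ε*((d:ℝ)-2)/2) := by positivity
      have hRHSpos : (0:ℝ) < (n:ℝ) ^ (-(1:ℝ)/2 - c) := by positivity
      rw [← Real.exp_log hLHSpos, ← Real.exp_log hRHSpos]
      apply Real.exp_le_exp.2
      rw [Real.log_mul (by positivity) (by positivity), Real.log_pow, Real.log_exp,
        Real.log_rpow hn0R, Real.log_rpow hn0R]
      set L := Real.log n with hLdef
      have hγL : 2 ≤ γ * L := by
        have := (div_le_iff₀ hγ).1 hlogn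
        linarith [this]
      exact stmt6aux_base ε δ γ c L d d₀ hε hεhalf hγdef hγ hcdef hd₀pos hdd₀ hL0 hγL
    have hE3 : ((n:ℝ) ^ (-(1:ℝ)/2 - c))^s ≤ (n:ℝ) ^ (-(1:ℝ)/2 - c) := by
      have hb1 : (n:ℝ) ^ (-(1:ℝ)/2 - c) ≤ 1 :=
        Real.rpow_le_one_of_one_le_of_nonpos hn1R.le (by linarith)
      have hb0 : (0:ℝ) ≤ (n:ℝ) ^ (-(1:ℝ)/2 - c) := Real.rpow_nonneg hn0R.le _
      calc ((n:ℝ) ^ (-(1:ℝ)/2 - c))^s ≤ ((n:ℝ) ^ (-(1:ℝ)/2 - c))^1 :=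
            pow_le_pow_of_le_one hb0 hb1 hs1
        _ = _ := pow_one _
    -- final assembly of the term bound
    calc (N.choose s : ℝ) * ((n.choose t : ℝ) * ((t:ℝ)^m * (n:ℝ)^(N*d - m)))
        = (N.choose s : ℝ) * (((n.choose t : ℝ) * (t:ℝ)^m) * (n:ℝ)^(N*d - m)) := by ring
      _ ≤ ((n:ℝ) ^ (δ*(d:ℝ)))^s * ((Real.exp 1 ^ m * ((n:ℝ)^t * (t:ℝ)^(m-t))) * (n:ℝ)^(N*d - m)) := by
          apply mul_le_mul hA1 (mul_le_mul_of_nonneg_right hA2 (by positivity))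
            (by positivity) (by positivity)
      _ ≤ ((n:ℝ) ^ (δ*(d:ℝ)))^s * ((Real.exp 1 ^ m * ((n:ℝ)^t * ((n:ℝ) ^ ((1:ℝ) - ε))^(m-t))) * (n:ℝ)^(N*d - m)) := by
          apply mul_le_mul_of_nonneg_left _ (by positivity)
          apply mul_le_mul_of_nonneg_right _ (by positivity)
          apply mul_le_mul_of_nonneg_left _ (by positivity)
          exact mul_le_mul_of_nonneg_left hA3 (by positivity)
      _ = Real.exp 1 ^ m * (((n:ℝ) ^ (δ*(d:ℝ)))^s * ((n:ℝ)^t * (((n:ℝ) ^ ((1:ℝ) - ε))^(m-t) * (n:ℝ)^(N*d - m)))) := by ring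
      _ = Real.exp 1 ^ m * ((n:ℝ)^(N*d) * (n:ℝ) ^ (δ*(d:ℝ)*s - ε*(((m:ℕ):ℝ) - t))) := by rw [hX]
      _ ≤ Real.exp 1 ^ m * ((n:ℝ)^(N*d) * (n:ℝ) ^ (δ*(d:ℝ)*s - ε*((s:ℝ)*((d:ℝ)-2)/2))) := by
          apply mul_le_mul_of_nonneg_left (mul_le_mul_of_nonneg_left hE1 (by positivity)) (by positivity)
      _ = (n:ℝ)^(N*d) * (Real.exp 1 ^ m * (n:ℝ) ^ (δ*(d:ℝ)*s - ε*((s:ℝ)*((d:ℝ)-2)/2))) := by ring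
      _ = (n:ℝ)^(N*d) * (Real.exp 1 ^ d * (n:ℝ) ^ (δ*(d:ℝ) - ε*((d:ℝ)-2)/2))^s := by rw [hE2]
      _ ≤ (n:ℝ)^(N*d) * ((n:ℝ) ^ (-(1:ℝ)/2 - c))^s := by
          apply mul_le_mul_of_nonneg_left (pow_le_pow_left₀ (by positivity) hbase s) (by positivity)
      _ ≤ (n:ℝ)^(N*d) * (n:ℝ) ^ (-(1:ℝ)/2 - c) :=
          mul_le_mul_of_nonneg_left hE3 (by positivity)
  -- the set of bad choice functions
  set Bad := (univ : Finset (Fin N × Fin d → Fin n)).filter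
      (fun f => ∃ U' : Finset (Fin N), U'.card ≤ r ∧
        (boundary (stmt6Eg f) U').card < 2 * U'.card) with hBaddef
  have hBadsub : Bad ⊆ (Finset.Icc 1 r).biUnion (fun s =>
      (powersetCard s (univ : Finset (Fin N))).biUnion (fun U' =>
        (univ : Finset (Fin N × Fin d → Fin n)).filter
          (fun f => ((U' ×ˢ (univ : Finset (Fin d))).image f).card ≤ tOf s))) := by
    intro f hf
    obtain ⟨U', hU'r, hU'b⟩ := (mem_filter.1 hf).2
    have hs1 : 1 ≤ U'.card := by
      rcases Nat.eq_zero_or_pos U'.card with h0 | h0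
      · rw [h0] at hU'b; omega
      · exact h0
    refine mem_biUnion.2 ⟨U'.card, mem_Icc.2 ⟨hs1, hU'r⟩, mem_biUnion.2
      ⟨U', mem_powersetCard.2 ⟨subset_univ _, rfl⟩, mem_filter.2 ⟨mem_univ _, ?_⟩⟩⟩
    exact stmt6_det_step f U' hU'b
  have hsumBad : Bad.card ≤ ∑ s ∈ Finset.Icc 1 r,
      N.choose s * (n.choose (tOf s) * (tOf s ^ (s*d) * n ^ (N*d - s*d))) := by
    refine le_trans (card_le_card hBadsub) (le_trans card_biUnion_le (sum_le_sum ?_))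
    intro s hs
    obtain ⟨hs1, hsr⟩ := mem_Icc.1 hs
    refine le_trans card_biUnion_le ?_
    have hterm : ∀ U' ∈ powersetCard s (univ : Finset (Fin N)),
        ((univ : Finset (Fin N × Fin d → Fin n)).filter
          (fun f => ((U' ×ˢ (univ : Finset (Fin d))).image f).card ≤ tOf s)).card
        ≤ n.choose (tOf s) * (tOf s ^ (s*d) * n ^ (N*d - s*d)) := by
      intro U' hU'
      have hU'c : U'.card = s := (mem_powersetCard.1 hU').2
      have := stmt6_count_step (d := d) U' (tOf s) (hkey s hs1 hsr).1
      rwa [hU'c] at this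
    calc _ ≤ ∑ _U' ∈ powersetCard s (univ : Finset (Fin N)),
          n.choose (tOf s) * (tOf s ^ (s*d) * n ^ (N*d - s*d)) := sum_le_sum hterm
      _ = _ := by rw [sum_const, smul_eq_mul, card_powersetCard, card_univ, Fintype.card_fin]
  -- pass to the reals and conclude `Bad.card < n ^ (N*d)`
  have hBadR : (Bad.card : ℝ) < (n:ℝ)^(N*d) := by
    have hcast : (Bad.card : ℝ) ≤ ∑ s ∈ Finset.Icc 1 r,
        ((N.choose s : ℝ) * ((n.choose (tOf s) : ℝ) *
          ((tOf s : ℝ) ^ (s*d) * (n:ℝ) ^ (N*d - s*d)))) := by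
      have := hsumBad
      have h2 : ((∑ s ∈ Finset.Icc 1 r,
          N.choose s * (n.choose (tOf s) * (tOf s ^ (s*d) * n ^ (N*d - s*d))) : ℕ) : ℝ)
          = ∑ s ∈ Finset.Icc 1 r, ((N.choose s : ℝ) * ((n.choose (tOf s) : ℝ) *
          ((tOf s : ℝ) ^ (s*d) * (n:ℝ) ^ (N*d - s*d)))) := by
        push_cast
        rfl
      rw [← h2]
      exact_mod_cast this
    have hsum2 : ∑ s ∈ Finset.Icc 1 r,
        ((N.choose s : ℝ) * ((n.choose (tOf s) : ℝ) *
          ((tOf s : ℝ) ^ (s*d) * (n:ℝ) ^ (N*d - s*d))))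
        ≤ (r:ℝ) * ((n:ℝ)^(N*d) * (n:ℝ) ^ (-(1:ℝ)/2 - c)) := by
      calc _ ≤ ∑ _s ∈ Finset.Icc 1 r, ((n:ℝ)^(N*d) * (n:ℝ) ^ (-(1:ℝ)/2 - c)) := by
            apply sum_le_sum
            intro s hs
            obtain ⟨hs1, hsr⟩ := mem_Icc.1 hs
            exact (hkey s hs1 hsr).2
        _ = ((Finset.Icc 1 r).card : ℝ) * ((n:ℝ)^(N*d) * (n:ℝ) ^ (-(1:ℝ)/2 - c)) := by
            rw [sum_const, nsmul_eq_mul]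
        _ ≤ (r:ℝ) * ((n:ℝ)^(N*d) * (n:ℝ) ^ (-(1:ℝ)/2 - c)) := by
            apply mul_le_mul_of_nonneg_right _ (by positivity)
            rw [Nat.card_Icc]
            simp
    have hfin : (r:ℝ) * ((n:ℝ)^(N*d) * (n:ℝ) ^ (-(1:ℝ)/2 - c)) < (n:ℝ)^(N*d) := by
      have hrn : (r:ℝ) * (n:ℝ) ^ (-(1:ℝ)/2 - c) < 1 := by
        calc (r:ℝ) * (n:ℝ) ^ (-(1:ℝ)/2 - c)
            ≤ (n:ℝ) ^ ((1:ℝ)/2) * (n:ℝ) ^ (-(1:ℝ)/2 - c) :=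
              mul_le_mul_of_nonneg_right hr (by positivity)
          _ = (n:ℝ) ^ ((1:ℝ)/2 + (-(1:ℝ)/2 - c)) := (Real.rpow_add hn0R _ _).symm
          _ = (n:ℝ) ^ (-c) := by congr 1; ring
          _ < 1 := Real.rpow_lt_one_of_one_lt_of_neg hn1R (by linarith)
      have hNdpos : (0:ℝ) < (n:ℝ)^(N*d) := by positivity
      calc (r:ℝ) * ((n:ℝ)^(N*d) * (n:ℝ) ^ (-(1:ℝ)/2 - c))
          = (n:ℝ)^(N*d) * ((r:ℝ) * (n:ℝ) ^ (-(1:ℝ)/2 - c)) := by ring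
        _ < (n:ℝ)^(N*d) * 1 := by
            exact mul_lt_mul_of_pos_left hrn hNdpos
        _ = (n:ℝ)^(N*d) := mul_one _
    exact lt_of_le_of_lt (le_trans hcast hsum2) hfin
  have hlt : Bad.card < (univ : Finset (Fin N × Fin d → Fin n)).card := by
    rw [card_univ, Fintype.card_fun, Fintype.card_prod, Fintype.card_fin,
      Fintype.card_fin, Fintype.card_fin]
    exact_mod_cast hBadR
  have hne : Bad ≠ univ := by
    intro hcontra
    rw [hcontra] at hlt
    exact lt_irrefl _ hlt
  obtain ⟨f, _, hfB⟩ := exists_of_ssubset (Finset.ssubset_univ_iff.2 hne)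
  refine ⟨f, fun U' hU'r => ?_⟩
  by_contra hcon
  push_neg at hcon
  exact hfB (mem_filter.2 ⟨mem_univ _, ⟨U', hU'r, hcon⟩⟩)
end

section
/- If an unsatisfiable CNF formula F has a resolution refutation without weakening steps in length L, width w, and clause space s, then F has a homogeneous resolution refutation (where every resolution step resolves C ∨ x and C ∨ ¬x to C) of length at most 3L, width at most w+1, and clause space at most s+2. -/
namespace Resolution

/-- A clause: a finite set of literals, a literal being a variable paired with
a polarity. -/
abbrev Clause (X : Type*) := Finset (X × Bool)

/-- A configuration: a finite set of clauses kept in memory. -/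
abbrev Config (X : Type*) := Finset (Clause X)

/-- A step of a configuration-style resolution refutation. -/
inductive Step (X : Type*) where
  /-- download of an axiom clause -/
  | ax (C : Clause X)
  /-- resolution: from B ∨ x and C ∨ ¬x infer B ∨ C -/
  | res (B C : Clause X) (x : X)
  /-- weakening: from B infer B ∨ C -/
  | weak (B C : Clause X)
  /-- erasure of a set of clauses -/
  | erase (S : Finset (Clause X))

variable {X : Type*} [DecidableEq X]

/-- The effect of a step on the memory configuration. -/
def Step.apply : Config X → Step X → Config X
  | M, .ax C => insert C M
  | M, .res B C _ => insert (B ∪ C) M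
  | M, .weak B C => insert (B ∪ C) M
  | M, .erase S => M \ S

/-- Legality of a step with respect to the formula `F` and current memory `M`. -/
def Step.ok (F : Finset (Clause X)) (M : Config X) : Step X → Prop
  | .ax C => C ∈ F
  | .res B C x =>
      insert (x, true) B ∈ M ∧ insert (x, false) C ∈ M ∧
      (x, true) ∉ B ∧ (x, false) ∉ B ∧ (x, true) ∉ C ∧ (x, false) ∉ C
  | .weak B _ => B ∈ M
  | .erase _ => True

/-- Validity of a sequence of steps starting from memory `M`. -/
def Valid (F : Finset (Clause X)) : Config X → List (Step X) → Prop
  | _, [] => True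
  | M, s :: rest => Step.ok F M s ∧ Valid F (Step.apply M s) rest

/-- `π` is a resolution refutation of `F`: it is valid starting from the empty
memory and the empty clause is eventually derived. -/
def IsRefutation (F : Finset (Clause X)) (π : List (Step X)) : Prop :=
  Valid F ∅ π ∧ (∅ : Clause X) ∈ π.foldl Step.apply ∅

/-- The sequence of configurations visited by `π`. -/
def configs (π : List (Step X)) : List (Config X) :=
  π.scanl Step.apply ∅

/-- Length: the number of axiom download and inference steps. -/
def length (π : List (Step X)) : ℕ :=
  (π.filter (fun s => match s with | .erase _ => false | _ => true)).length

/-- Width: the maximal size of a clause appearing in some configuration. -/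
def width (π : List (Step X)) : ℕ :=
  ((configs π).map (fun M => M.sup Finset.card)).foldr max 0

/-- Clause space: the maximal number of clauses in a configuration. -/
def space (π : List (Step X)) : ℕ :=
  ((configs π).map Finset.card).foldr max 0

/-- Variable space: the maximal number of distinct variables in a configuration. -/
def varSpace (π : List (Step X)) : ℕ :=
  ((configs π).map (fun M => (M.sup (fun C => C.image Prod.fst)).card)).foldr max 0

/-- A refutation is homogeneous if every resolution step resolves C ∨ x and
C ∨ ¬x to C. -/
def Homogeneous (π : List (Step X)) : Prop :=
  ∀ s ∈ π, ∀ B C : Clause X, ∀ x : X, s = Step.res B C x → B = C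

/-- No weakening steps occur in `π`. -/
def NoWeakening (π : List (Step X)) : Prop :=
  ∀ s ∈ π, ∀ B C : Clause X, s ≠ Step.weak B C

end Resolution


/-!
Each resolution step `B ∨ x, C ∨ ¬x ⊢ B ∨ C` is simulated by weakening the two premises to
`B ∨ C ∨ x` and `B ∨ C ∨ ¬x`, resolving these homogeneously to `B ∨ C`, and erasing the two
weakened clauses again. This triples the length at worst; the weakened clauses have one literal
more than `B ∨ C`, and at most two of them are in memory on top of the original configuration.
-/

theorem Finset.insert_insert_insert_sdiff_pair_sdiff {α : Type*} [DecidableEq α] {M : Finset α}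
    {a b d : α} (ha : d ≠ a) (hb : d ≠ b) :
    insert d (insert b (insert a M)) \ ({a, b} \ M) = insert d M := by
  ext e
  simp only [Finset.mem_sdiff, Finset.mem_insert, Finset.mem_singleton]
  grind

theorem List.foldr_max_map_le_add {α : Type*} {l l' : List α} (f : α → ℕ) (c : ℕ)
    (h : ∀ a ∈ l', ∃ b ∈ l, f a ≤ f b + c) :
    (l'.map f).foldr max 0 ≤ (l.map f).foldr max 0 + c := by
  refine List.max_le_of_forall_le _ _ fun n hn => ?_
  obtain ⟨a, ha, rfl⟩ := List.mem_map.1 hn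
  obtain ⟨b, hb, hab⟩ := h a ha
  have : f b ≤ (l.map f).foldr max 0 := List.le_max_of_le (List.mem_map_of_mem hb) le_rfl
  omega

theorem List.mem_scanl_append {α β : Type*} {f : β → α → β} {b c : β} {l₁ l₂ : List α}
    (h : c ∈ (l₁ ++ l₂).scanl f b) : c ∈ l₁.scanl f b ∨ c ∈ l₂.scanl f (l₁.foldl f b) := by
  rw [List.scanl_append, List.mem_append] at h
  exact h.imp_right List.mem_of_mem_tail

namespace Resolution

variable {X : Type*}

section Lists

variable {l₁ l₂ : List (Step X)}

theorem length_append :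
    Resolution.length (l₁ ++ l₂) = Resolution.length l₁ + Resolution.length l₂ := by
  simp [Resolution.length]

theorem Homogeneous.append (h₁ : Homogeneous l₁) (h₂ : Homogeneous l₂) :
    Homogeneous (l₁ ++ l₂) := by
  intro s hs
  rcases List.mem_append.1 hs with hs | hs
  exacts [h₁ s hs, h₂ s hs]

end Lists

variable [DecidableEq X]

theorem valid_append {F : Finset (Clause X)} {M : Config X} {l₁ l₂ : List (Step X)} :
    Valid F M (l₁ ++ l₂) ↔ Valid F M l₁ ∧ Valid F (l₁.foldl Step.apply M) l₂ := by
  induction l₁ generalizing M with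
  | nil => simp [Valid]
  | cons s l ih => simp [Valid, ih, and_assoc]

/-- Only the weakened clauses that were not already in memory are erased, so that the block
ends in exactly the configuration reached by the original step. -/
def Step.homogenize (M : Config X) : Step X → List (Step X)
  | .res B C x =>
      [.weak (insert (x, true) B) C, .weak (insert (x, false) C) B, .res (B ∪ C) (B ∪ C) x,
        .erase ({insert (x, true) (B ∪ C), insert (x, false) (B ∪ C)} \ M)]
  | s => [s]

def homogenize : Config X → List (Step X) → List (Step X)
  | _, [] => []
  | M, s :: π => s.homogenize M ++ homogenize (Step.apply M s) π

section Res

variable {B C : Clause X} {x : X} {M : Config X}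

theorem scanl_homogenize_res :
    ((Step.res B C x).homogenize M).scanl Step.apply M =
      [M, insert (insert (x, true) (B ∪ C)) M,
        insert (insert (x, false) (B ∪ C)) (insert (insert (x, true) (B ∪ C)) M),
        insert (B ∪ C) (insert (insert (x, false) (B ∪ C)) (insert (insert (x, true) (B ∪ C)) M)),
        insert (B ∪ C) (insert (insert (x, false) (B ∪ C)) (insert (insert (x, true) (B ∪ C)) M)) \
          ({insert (x, true) (B ∪ C), insert (x, false) (B ∪ C)} \ M)] := by
  have hCB : insert (x, false) C ∪ B = insert (x, false) (B ∪ C) := by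
    rw [Finset.insert_union, Finset.union_comm]
  simp [Step.homogenize, Step.apply, Finset.insert_union, hCB]

theorem subset_of_mem_scanl_homogenize_res {N : Config X}
    (hN : N ∈ ((Step.res B C x).homogenize M).scanl Step.apply M) :
    N ⊆ insert (insert (x, true) (B ∪ C)) (insert (insert (x, false) (B ∪ C))
      (Step.apply M (.res B C x))) := by
  rw [scanl_homogenize_res] at hN
  simp only [List.mem_cons, List.not_mem_nil, or_false] at hN
  rcases hN with rfl | rfl | rfl | rfl | rfl <;> intro E <;> simp [Step.apply] <;> tauto

theorem foldl_homogenize_res (hB : (x, true) ∉ B ∧ (x, false) ∉ B)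
    (hC : (x, true) ∉ C ∧ (x, false) ∉ C) :
    ((Step.res B C x).homogenize M).foldl Step.apply M = Step.apply M (.res B C x) := by
  have hne : ∀ b, (x, b) ∉ B ∪ C → B ∪ C ≠ insert (x, b) (B ∪ C) := fun b hb h =>
    hb (h ▸ Finset.mem_insert_self _ _)
  rw [← List.getLast_scanl List.scanl_ne_nil, List.getLast_congr _ (List.cons_ne_nil _ _)
    scanl_homogenize_res, List.getLast_cons_cons]
  simp only [List.getLast_cons_cons, List.getLast_singleton, Step.apply]
  exact Finset.insert_insert_insert_sdiff_pair_sdiff (hne _ (by simp [hB, hC]))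
    (hne _ (by simp [hB, hC]))

end Res

section Step

variable {F : Finset (Clause X)} {M : Config X} {s : Step X}

theorem valid_homogenize_step (h : Step.ok F M s) : Valid F M (s.homogenize M) := by
  cases s with
  | res B C x =>
    obtain ⟨hB, hC, hxB, hxB', hxC, hxC'⟩ := h
    simp [Step.homogenize, Valid, Step.ok, Step.apply, Finset.union_comm C B, hB, hC, hxB,
      hxB', hxC, hxC']
  | _ => exact ⟨h, trivial⟩

theorem foldl_homogenize_step (h : Step.ok F M s) :
    (s.homogenize M).foldl Step.apply M = Step.apply M s := by
  cases s with
  | res B C x => exact foldl_homogenize_res ⟨h.2.2.1, h.2.2.2.1⟩ ⟨h.2.2.2.2.1, h.2.2.2.2.2⟩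
  | _ => rfl

theorem homogeneous_homogenize_step : Homogeneous (s.homogenize M) := by
  cases s <;> simp [Step.homogenize, Homogeneous]

theorem length_homogenize_step :
    Resolution.length (s.homogenize M) ≤ 3 * Resolution.length [s] := by
  cases s <;> simp [Step.homogenize, Resolution.length]

theorem card_le_of_mem_scanl_homogenize_step {N : Config X}
    (hN : N ∈ (s.homogenize M).scanl Step.apply M) :
    N.card ≤ max M.card (Step.apply M s).card + 2 := by
  cases s with
  | res B C x =>
    calc N.card
        ≤ (insert (insert (x, true) (B ∪ C)) (insert (insert (x, false) (B ∪ C))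
            (Step.apply M (.res B C x)))).card :=
          Finset.card_le_card (subset_of_mem_scanl_homogenize_res hN)
      _ ≤ (Step.apply M (.res B C x)).card + 2 :=
          (Finset.card_insert_le _ _).trans (by grw [Finset.card_insert_le])
      _ ≤ _ := by omega
  | _ =>
    simp only [Step.homogenize, List.scanl_singleton, List.mem_cons, List.not_mem_nil,
      or_false] at hN
    rcases hN with rfl | rfl <;> omega

theorem sup_card_le_of_mem_scanl_homogenize_step {N : Config X}
    (hN : N ∈ (s.homogenize M).scanl Step.apply M) :
    N.sup Finset.card ≤ max (M.sup Finset.card) ((Step.apply M s).sup Finset.card) + 1 := by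
  cases s with
  | res B C x =>
    set M' := Step.apply M (.res B C x)
    have hD : (B ∪ C).card ≤ M'.sup Finset.card :=
      Finset.le_sup (f := Finset.card) (Finset.mem_insert_self _ _)
    have hlit : ∀ b, (insert (x, b) (B ∪ C)).card ≤ M'.sup Finset.card + 1 := fun b =>
      (Finset.card_insert_le _ _).trans (by omega)
    calc N.sup Finset.card
        ≤ (insert (insert (x, true) (B ∪ C)) (insert (insert (x, false) (B ∪ C)) M')).sup
            Finset.card := Finset.sup_mono (subset_of_mem_scanl_homogenize_res hN)
      _ ≤ M'.sup Finset.card + 1 := by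
          simp only [Finset.sup_insert, sup_le_iff]
          exact ⟨hlit true, hlit false, by omega⟩
      _ ≤ _ := by omega
  | _ =>
    simp only [Step.homogenize, List.scanl_singleton, List.mem_cons, List.not_mem_nil,
      or_false] at hN
    rcases hN with rfl | rfl <;> omega

end Step

section Homogenize

variable {F : Finset (Clause X)}

theorem foldl_homogenize {M : Config X} {π : List (Step X)} (hπ : Valid F M π) :
    (homogenize M π).foldl Step.apply M = π.foldl Step.apply M := by
  induction π generalizing M with
  | nil => rfl
  | cons s π ih =>
    rw [homogenize, List.foldl_append, foldl_homogenize_step hπ.1, ih hπ.2, List.foldl_cons]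

theorem valid_homogenize {M : Config X} {π : List (Step X)} (hπ : Valid F M π) :
    Valid F M (homogenize M π) := by
  induction π generalizing M with
  | nil => trivial
  | cons s π ih =>
    rw [homogenize, valid_append, foldl_homogenize_step hπ.1]
    exact ⟨valid_homogenize_step hπ.1, ih hπ.2⟩

theorem homogeneous_homogenize (M : Config X) (π : List (Step X)) :
    Homogeneous (homogenize M π) := by
  induction π generalizing M with
  | nil => nofun
  | cons s π ih => exact homogeneous_homogenize_step.append (ih _)

theorem length_homogenize (M : Config X) (π : List (Step X)) :
    Resolution.length (homogenize M π) ≤ 3 * Resolution.length π := by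
  induction π generalizing M with
  | nil => rfl
  | cons s π ih =>
    rw [homogenize, length_append, ← List.singleton_append, length_append]
    have := ih (Step.apply M s)
    have := length_homogenize_step (s := s) (M := M)
    omega

theorem exists_le_of_mem_scanl_homogenize (f : Config X → ℕ) (c : ℕ)
    (hstep : ∀ M s N, N ∈ (s.homogenize M).scanl Step.apply M →
      f N ≤ max (f M) (f (Step.apply M s)) + c)
    {M : Config X} {π : List (Step X)} (hπ : Valid F M π) {N : Config X}
    (hN : N ∈ (homogenize M π).scanl Step.apply M) :
    ∃ N' ∈ π.scanl Step.apply M, f N ≤ f N' + c := by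
  induction π generalizing M with
  | nil =>
    simp only [homogenize, List.scanl_nil, List.mem_singleton] at hN
    exact ⟨M, by simp, hN ▸ le_self_add⟩
  | cons s π ih =>
    rw [homogenize] at hN
    rcases List.mem_scanl_append hN with hN | hN
    · have hM : M ∈ (s :: π).scanl Step.apply M := by simp
      have hM' : Step.apply M s ∈ (s :: π).scanl Step.apply M := by
        rw [List.scanl_cons]
        exact List.mem_cons_of_mem _ (by cases π <;> simp)
      have hle := hstep M s N hN
      rcases max_choice (f M) (f (Step.apply M s)) with h | h <;> rw [h] at hle
      exacts [⟨_, hM, hle⟩, ⟨_, hM', hle⟩]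
    · rw [foldl_homogenize_step hπ.1] at hN
      obtain ⟨N', hN', hle⟩ := ih hπ.2 hN
      exact ⟨N', by rw [List.scanl_cons]; exact List.mem_cons_of_mem _ hN', hle⟩

theorem width_homogenize {π : List (Step X)} (hπ : Valid F ∅ π) :
    width (homogenize ∅ π) ≤ width π + 1 :=
  List.foldr_max_map_le_add _ _ fun _ hN => exists_le_of_mem_scanl_homogenize _ _
    (fun _ _ _ => sup_card_le_of_mem_scanl_homogenize_step) hπ hN

theorem space_homogenize {π : List (Step X)} (hπ : Valid F ∅ π) :
    space (homogenize ∅ π) ≤ space π + 2 :=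
  List.foldr_max_map_le_add _ _ fun _ hN => exists_le_of_mem_scanl_homogenize _ _
    (fun _ _ _ => card_le_of_mem_scanl_homogenize_step) hπ hN

end Homogenize

end Resolution

open Resolution

theorem stmt8_general {X : Type*} [DecidableEq X] (F : Finset (Clause X))
    (π : List (Step X)) (L w s : ℕ)
    (href : IsRefutation F π)
    (hL : Resolution.length π ≤ L) (hw : width π ≤ w) (hs : space π ≤ s) :
    ∃ π' : List (Step X), IsRefutation F π' ∧ Homogeneous π' ∧
      Resolution.length π' ≤ 3 * L ∧ width π' ≤ w + 1 ∧ space π' ≤ s + 2 := by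
  obtain ⟨hvalid, hempty⟩ := href
  refine ⟨homogenize ∅ π, ⟨valid_homogenize hvalid, ?_⟩, homogeneous_homogenize ∅ π, ?_, ?_, ?_⟩
  · rw [foldl_homogenize hvalid]
    exact hempty
  · exact (length_homogenize ∅ π).trans (by omega)
  · exact (width_homogenize hvalid).trans (by omega)
  · exact (space_homogenize hvalid).trans (by omega)

/-- a refutation without weakening of length L, width w and clause
space s can be turned into a homogeneous refutation of length at most 3L, width
at most w+1 and clause space at most s+2. -/
theorem stmt8 {X : Type*} [DecidableEq X] (F : Finset (Clause X))
    (π : List (Step X)) (L w s : ℕ)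
    (href : IsRefutation F π) (hnw : NoWeakening π)
    (hL : Resolution.length π ≤ L) (hw : width π ≤ w) (hs : space π ≤ s) :
    ∃ π' : List (Step X), IsRefutation F π' ∧ Homogeneous π' ∧
      Resolution.length π' ≤ 3 * L ∧ width π' ≤ w + 1 ∧ space π' ≤ s + 2 :=
  stmt8_general F π L w s href hL hw hs
end

section
/- Let F be unsatisfiable over variables U, G = (U ∪ V, E) bipartite, and C a clause of F[G] belonging to the CNF expansion A[G] of an axiom A ∈ F. Let D be any clause over a variable set W ⊇ Vars(A) such that D[G] and C are simultaneously falsifiable. Then A is a subclause of D (A subsumes D). -/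
namespace Resolution

variable {U V : Type*} [DecidableEq U] [DecidableEq V]

/-- The truth value of the XOR ⊕_{v ∈ N(u)} v under assignment `α`. -/
def parity (E : Finset (U × V)) (u : U) (α : V → Bool) : Bool :=
  decide (((nbhdSet E {u}).filter (fun v => α v = true)).card % 2 = 1)

/-- The truth value of the XORified literal a[G] under `α`: a positive literal u
becomes ⊕_{v ∈ N(u)} v, a negative literal its negation. -/
def litVal (E : Finset (U × V)) (a : U × Bool) (α : V → Bool) : Bool :=
  parity E a.1 α == a.2

/-- The right-hand variables appearing in the XORification of clause `C`. -/
def xvars (E : Finset (U × V)) (C : Clause U) : Finset V :=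
  C.sup (fun a => nbhdSet E {a.1})

/-- `α` falsifies the clause `D`. -/
def FalsifiesClause (α : V → Bool) (D : Clause V) : Prop :=
  ∀ lit ∈ D, α lit.1 ≠ lit.2

/-- `α` falsifies the clause set (CNF formula) `G`, i.e. falsifies some clause. -/
def FalsifiesCNF (α : V → Bool) (G : Finset (Clause V)) : Prop :=
  ∃ D ∈ G, FalsifiesClause α D

/-- The canonical CNF expansion C[G] of the disjunction of the XORified
literals of `C`: one clause for each pattern on xvars falsifying all of them. -/
def xorClause [Fintype V] (E : Finset (U × V)) (C : Clause U) : Finset (Clause V) :=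
  ((Finset.univ : Finset (V → Bool)).filter
      (fun α => ∀ a ∈ C, litVal E a α = false)).image
    (fun α => (xvars E C).image (fun v => (v, ! α v)))

/-- The XORification F[G] of a CNF formula `F` with respect to the bipartite
graph with edge set `E`. -/
def xorCNF [Fintype V] (E : Finset (U × V)) (F : Finset (Clause U)) :
    Finset (Clause V) :=
  F.sup (xorClause E)

end Resolution


open Resolution

/-- let C be a clause of the expansion A[G] of an axiom A, and D
a clause over a variable set containing Vars(A) such that D[G] and C are
simultaneously falsifiable. Then A subsumes D, i.e. A ⊆ D. -/
theorem stmt14 {U V : Type*} [DecidableEq U] [DecidableEq V] [Fintype V]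
    (E : Finset (U × V)) (A : Clause U) (C : Clause V)
    (hC : C ∈ xorClause E A) (D : Clause U)
    (hvars : A.image Prod.fst ⊆ D.image Prod.fst)
    (hsf : ∃ α : V → Bool,
      (∀ lit ∈ D, litVal E lit α = false) ∧ FalsifiesClause α C) :
    A ⊆ D := by
  classical
  obtain ⟨α, hD, hfC⟩ := hsf
  rw [xorClause, Finset.mem_image] at hC
  obtain ⟨β, hβmem, hCeq⟩ := hC
  have hβ := (Finset.mem_filter.mp hβmem).2
  -- α and β agree on xvars E A
  have hagree : ∀ v ∈ xvars E A, α v = β v := by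
    intro v hv
    have hmem : (v, ! β v) ∈ C := by
      rw [← hCeq]; exact Finset.mem_image_of_mem _ hv
    have := hfC _ hmem
    simp only at this
    cases h : β v <;> cases h' : α v <;> simp [h, h'] at this ⊢
  intro a ha
  -- parity agrees for a.1
  have hsub : nbhdSet E {a.1} ⊆ xvars E A := by
    intro v hv
    unfold xvars
    rw [Finset.mem_sup]
    exact ⟨a, ha, hv⟩
  have hpar : parity E a.1 α = parity E a.1 β := by
    have hfe : (nbhdSet E {a.1}).filter (fun v => α v = true)
        = (nbhdSet E {a.1}).filter (fun v => β v = true) := by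
      apply Finset.filter_congr
      intro v hv
      rw [hagree v (hsub hv)]
    unfold parity
    rw [hfe]
  have hlit : litVal E a α = false := by
    have := hβ a ha
    unfold litVal at this ⊢
    rw [hpar]; exact this
  -- find the literal of D with variable a.1
  have : a.1 ∈ D.image Prod.fst := hvars (Finset.mem_image_of_mem _ ha)
  obtain ⟨b, hbD, hb1⟩ := Finset.mem_image.mp this
  have hlit' : litVal E b α = false := hD b hbD
  unfold litVal at hlit hlit'
  rw [hb1] at hlit'
  have : a.2 = b.2 := by
    cases hp : parity E a.1 α <;> rw [hp] at hlit hlit' <;>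
      cases h1 : a.2 <;> cases h2 : b.2 <;> simp_all
  have : a = b := Prod.ext hb1.symm this
  rwa [this]
end
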